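/- arXiv:1806.02647 — 6 statements merged into one kernel-verified Lean document; each statement's English description precedes it below -/
import Mathlib

section
/- Let 0 < ε_1 < … < ε_m be tolerances and let c be the cost values of the dynamic program. For every k with 2 ≤ k ≤ m and every shortcut (i,j) (with i < j) that is valid for ε_{k−1}, it holds that c(k,(i,j)) = c(k−1,(i,j)) + 1. -/
/-! Concatenating optimal `ε_{k-1}`-paths along the edges of an `ε_k`-path gives an
`ε_{k-1}`-path from `i` to `j`, so `minCost` at tolerance `ε_{k-1}` is subadditive along
`ε_k`-paths. Since `c k = 1 + minCost (ε (k-1)) (c (k-1))` on valid shortcuts (and `c 1 = 1 + 0`)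
and a path from `i < j` has at least one edge, `c k i j` is at most the `c k`-cost of every
`ε_k`-path from `i` to `j`. Applied at level `k - 1`, the one-edge path `[i, j]` is optimal,
so `minCost (ε (k-1)) (c (k-1)) i j = c (k-1) i j` and the recursion gives the increment. -/

open Metric

noncomputable section

/-- The Euclidean plane. -/
abbrev Pt : Type := EuclideanSpace ℝ (Fin 2)

/-- The subcurve `⟨p i, …, p j⟩`: the union of the segments between consecutive vertices. -/
def subcurve {n : ℕ} (p : Fin n → Pt) (i j : Fin n) : Set Pt :=
  ⋃ (t : Fin n) (_ : i ≤ t ∧ t < j) (h : (t : ℕ) + 1 < n),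
    segment ℝ (p t) (p ⟨(t : ℕ) + 1, h⟩)

/-- The (Hausdorff-distance) error of the shortcut `(i, j)`. -/
def err {n : ℕ} (p : Fin n → Pt) (i j : Fin n) : ℝ :=
  Metric.hausdorffDist (segment ℝ (p i) (p j)) (subcurve p i j)

/-- The edges (consecutive pairs) of a path given as a list of vertices. -/
def edges {n : ℕ} (l : List (Fin n)) : List (Fin n × Fin n) := l.zip l.tail

/-- `l` is a path from `i` to `j` at tolerance `ε`: a strictly increasing sequence of
indices starting at `i`, ending at `j`, all of whose edges are valid shortcuts for `ε`. -/
def IsPath {n : ℕ} (p : Fin n → Pt) (ε : ℝ) (i j : Fin n) (l : List (Fin n)) : Prop :=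
  l.Chain' (· < ·) ∧ l.head? = some i ∧ l.getLast? = some j ∧
    ∀ e ∈ edges l, err p e.1 e.2 ≤ ε

/-- The cost of a path: the sum of the costs of its edges. -/
def pathCost {n : ℕ} {α : Type*} [AddCommMonoid α] (c : Fin n → Fin n → α)
    (l : List (Fin n)) : α :=
  ((edges l).map (fun e => c e.1 e.2)).sum

/-- Minimum cost (natural-valued) of a path from `i` to `j` at tolerance `ε`. -/
def minCost {n : ℕ} (p : Fin n → Pt) (ε : ℝ) (c : Fin n → Fin n → ℕ) (i j : Fin n) : ℕ :=
  sInf {s : ℕ | ∃ l, IsPath p ε i j l ∧ pathCost c l = s}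

/-- Minimum cost (real-valued) of a path from `i` to `j` at tolerance `ε`. -/
def minCostR {n : ℕ} (p : Fin n → Pt) (ε : ℝ) (c : Fin n → Fin n → ℝ) (i j : Fin n) : ℝ :=
  sInf {s : ℝ | ∃ l, IsPath p ε i j l ∧ pathCost c l = s}

section Paths

variable {n : ℕ} {p : Fin n → Pt} {ε : ℝ} {x y z : Fin n}

lemma edges_cons_cons (a b : Fin n) (l : List (Fin n)) :
    edges (a :: b :: l) = (a, b) :: edges (b :: l) := rfl

lemma isPath_iff {l : List (Fin n)} :
    IsPath p ε x z l ↔ l.IsChain (· < ·) ∧ l.head? = some x ∧ l.getLast? = some z ∧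
      ∀ e ∈ edges l, err p e.1 e.2 ≤ ε :=
  Iff.rfl

lemma not_isPath_nil : ¬ IsPath p ε x z [] := by
  simp [isPath_iff]

lemma isPath_singleton_iff {a : Fin n} : IsPath p ε x z [a] ↔ a = x ∧ a = z := by
  simp [isPath_iff, edges, eq_comm]

lemma isPath_cons_cons_iff {a b : Fin n} {l : List (Fin n)} :
    IsPath p ε x z (a :: b :: l) ↔
      a = x ∧ a < b ∧ err p a b ≤ ε ∧ IsPath p ε b z (b :: l) := by
  simp only [isPath_iff, List.isChain_cons_cons, List.head?_cons, Option.some.injEq,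
    List.getLast?_cons_cons, edges_cons_cons, List.forall_mem_cons, true_and]
  tauto

lemma isPath_pair (hxy : x < y) (h : err p x y ≤ ε) : IsPath p ε x y [x, y] := by
  simp [isPath_cons_cons_iff, isPath_singleton_iff, hxy, h]

lemma IsPath.exists_eq_cons {l : List (Fin n)} (h : IsPath p ε x z l) : ∃ t, l = x :: t := by
  obtain ⟨-, hx, -⟩ := h
  exact List.head?_eq_some_iff.1 hx

lemma IsPath.edges_ne_nil {l : List (Fin n)} (h : IsPath p ε x z l) (hxz : x ≠ z) :
    edges l ≠ [] := by
  rcases l with _ | ⟨a, _ | ⟨b, l⟩⟩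
  · exact absurd h not_isPath_nil
  · obtain ⟨rfl, rfl⟩ := isPath_singleton_iff.1 h
    exact absurd rfl hxz
  · simp [edges_cons_cons]

lemma IsPath.append {l₁ l₂ : List (Fin n)} (h₁ : IsPath p ε x y l₁) (h₂ : IsPath p ε y z l₂) :
    IsPath p ε x z (l₁ ++ l₂.tail) := by
  obtain ⟨t, rfl⟩ := h₂.exists_eq_cons
  induction l₁ generalizing x with
  | nil => exact absurd h₁ not_isPath_nil
  | cons a l₁ ih =>
    rcases l₁ with _ | ⟨b, l₁⟩
    · obtain ⟨rfl, rfl⟩ := isPath_singleton_iff.1 h₁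
      exact h₂
    · obtain ⟨rfl, hab, herr, h₁⟩ := isPath_cons_cons_iff.1 h₁
      exact isPath_cons_cons_iff.2 ⟨rfl, hab, herr, ih h₁⟩

lemma IsPath.pathCost_append {α : Type*} [AddCommMonoid α] (c : Fin n → Fin n → α)
    {l₁ l₂ : List (Fin n)} (h₁ : IsPath p ε x y l₁) (h₂ : IsPath p ε y z l₂) :
    pathCost c (l₁ ++ l₂.tail) = pathCost c l₁ + pathCost c l₂ := by
  obtain ⟨t, rfl⟩ := h₂.exists_eq_cons
  induction l₁ generalizing x with
  | nil => exact absurd h₁ not_isPath_nil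
  | cons a l₁ ih =>
    rcases l₁ with _ | ⟨b, l₁⟩
    · obtain ⟨rfl, rfl⟩ := isPath_singleton_iff.1 h₁
      simp [pathCost, edges]
    · obtain ⟨rfl, -, -, h₁⟩ := isPath_cons_cons_iff.1 h₁
      simp only [pathCost, List.cons_append, edges_cons_cons, List.map_cons, List.sum_cons] at ih ⊢
      rw [ih h₁, add_assoc]

lemma IsPath.forall_mem_edges {l : List (Fin n)} (h : IsPath p ε x z l) :
    ∀ e ∈ edges l, e.1 < e.2 ∧ err p e.1 e.2 ≤ ε := by
  induction l generalizing x with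
  | nil => simp [edges]
  | cons a l ih =>
    rcases l with _ | ⟨b, l⟩
    · simp [edges]
    · obtain ⟨-, hab, herr, h⟩ := isPath_cons_cons_iff.1 h
      simpa [edges_cons_cons, hab, herr] using ih h

end Paths

section Subcurve

variable {n : ℕ} (p : Fin n → Pt) {i j : Fin n}

lemma subcurve_of_val_succ (h : (i : ℕ) + 1 = j) : subcurve p i j = segment ℝ (p i) (p j) := by
  ext x
  simp only [subcurve, Set.mem_iUnion]
  constructor
  · rintro ⟨t, ⟨hit, htj⟩, ht, hx⟩
    obtain rfl : t = i := Fin.ext (by simp only [Fin.le_def, Fin.lt_def] at hit htj; omega)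
    rwa [show (⟨t + 1, ht⟩ : Fin n) = j from Fin.ext h] at hx
  · intro hx
    refine ⟨i, ⟨le_rfl, Fin.lt_def.2 (by omega)⟩, by omega, ?_⟩
    rwa [show (⟨i + 1, _⟩ : Fin n) = j from Fin.ext h]

lemma err_of_val_succ (h : (i : ℕ) + 1 = j) : err p i j = 0 := by
  rw [err, subcurve_of_val_succ p h, hausdorffDist_self_zero]

end Subcurve

section MinCost

variable {n : ℕ} {p : Fin n → Pt} {ε ε' : ℝ} {i j : Fin n} {c : Fin n → Fin n → ℕ}

lemma exists_isPath (hε : 0 ≤ ε) (hij : i < j) : ∃ l, IsPath p ε i j l := by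
  obtain ⟨d, hd⟩ : ∃ d, (j : ℕ) = i + d + 1 := ⟨j - i - 1, by rw [Fin.lt_def] at hij; omega⟩
  induction d generalizing i with
  | zero =>
    exact ⟨[i, j], isPath_pair hij ((err_of_val_succ p hd.symm).trans_le hε)⟩
  | succ d ih =>
    let i' : Fin n := ⟨i + 1, by omega⟩
    have hii' : (i : ℕ) + 1 = i' := rfl
    obtain ⟨l, hl⟩ := ih (i := i') (Fin.lt_def.2 (by simp [i']; omega)) (by simp [i']; omega)
    exact ⟨_, (isPath_pair (Fin.lt_def.2 (by omega))
      ((err_of_val_succ p hii').trans_le hε)).append hl⟩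

lemma minCost_le_pathCost {l : List (Fin n)} (h : IsPath p ε i j l) :
    minCost p ε c i j ≤ pathCost c l :=
  Nat.sInf_le ⟨l, h, rfl⟩

lemma minCost_le_of_err_le (hij : i < j) (h : err p i j ≤ ε) : minCost p ε c i j ≤ c i j := by
  simpa [pathCost, edges] using minCost_le_pathCost (c := c) (isPath_pair hij h)

lemma exists_isPath_pathCost_eq_minCost (hε : 0 ≤ ε) (hij : i < j) :
    ∃ l, IsPath p ε i j l ∧ pathCost c l = minCost p ε c i j := by
  obtain ⟨l, hl⟩ := exists_isPath (p := p) hε hij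
  exact Nat.sInf_mem (s := {s | ∃ l, IsPath p ε i j l ∧ pathCost c l = s}) ⟨_, l, hl, rfl⟩

lemma minCost_eq_of_le_pathCost (hε : 0 ≤ ε) (hij : i < j) (herr : err p i j ≤ ε)
    (h : ∀ l, IsPath p ε i j l → c i j ≤ pathCost c l) : minCost p ε c i j = c i j := by
  obtain ⟨l, hl, hcost⟩ := exists_isPath_pathCost_eq_minCost (c := c) hε hij
  exact (minCost_le_of_err_le hij herr).antisymm (hcost ▸ h l hl)

lemma IsPath.exists_pathCost_eq_pathCost_minCost (hε' : 0 ≤ ε') {x z : Fin n}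
    {l : List (Fin n)} (h : IsPath p ε x z l) :
    ∃ l', IsPath p ε' x z l' ∧ pathCost c l' = pathCost (minCost p ε' c) l := by
  induction l generalizing x with
  | nil => exact absurd h not_isPath_nil
  | cons a l ih =>
    rcases l with _ | ⟨b, l⟩
    · obtain ⟨rfl, rfl⟩ := isPath_singleton_iff.1 h
      exact ⟨[a], isPath_singleton_iff.2 ⟨rfl, rfl⟩, rfl⟩
    · obtain ⟨rfl, hab, -, h⟩ := isPath_cons_cons_iff.1 h
      obtain ⟨l₀, hl₀, hcost₀⟩ := exists_isPath_pathCost_eq_minCost (p := p) (c := c) hε' hab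
      obtain ⟨l₁, hl₁, hcost₁⟩ := ih h
      refine ⟨l₀ ++ l₁.tail, hl₀.append hl₁, ?_⟩
      rw [hl₀.pathCost_append c hl₁, hcost₀, hcost₁]
      rfl

lemma minCost_le_pathCost_minCost (hε' : 0 ≤ ε') {l : List (Fin n)} (h : IsPath p ε i j l) :
    minCost p ε' c i j ≤ pathCost (minCost p ε' c) l := by
  obtain ⟨l', hl', hcost⟩ := h.exists_pathCost_eq_pathCost_minCost (c := c) hε'
  exact hcost ▸ minCost_le_pathCost hl'

end MinCost

section CostRecursion

variable {n : ℕ} {p : Fin n → Pt} {i j : Fin n} {l : List (Fin n)}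

lemma pathCost_eq_length_add {c f : Fin n → Fin n → ℕ}
    (hc : ∀ e ∈ edges l, c e.1 e.2 = 1 + f e.1 e.2) :
    pathCost c l = (edges l).length + pathCost f l := by
  rw [pathCost, List.map_congr_left hc, List.sum_map_add]
  simp [pathCost]

lemma IsPath.le_pathCost_of_forall_eq_one_add {ε : ℝ} {c f : Fin n → Fin n → ℕ}
    (h : IsPath p ε i j l) (hij : i < j) (herr : err p i j ≤ ε)
    (hc : ∀ x y, x < y → err p x y ≤ ε → c x y = 1 + f x y) (hf : f i j ≤ pathCost f l) :
    c i j ≤ pathCost c l := by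
  have hlen := List.length_pos_iff.2 (h.edges_ne_nil hij.ne)
  rw [hc i j hij herr, pathCost_eq_length_add fun e he =>
    hc _ _ (h.forall_mem_edges e he).1 (h.forall_mem_edges e he).2]
  omega

lemma cost_le_pathCost {m : ℕ} {ε : ℕ → ℝ} {c : ℕ → Fin n → Fin n → ℕ}
    (hε : ∀ k, 1 ≤ k → k ≤ m → 0 ≤ ε k)
    (hc1 : ∀ i j : Fin n, i < j → err p i j ≤ ε 1 → c 1 i j = 1)
    (hck : ∀ k, 2 ≤ k → k ≤ m → ∀ i j : Fin n, i < j → err p i j ≤ ε k →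
      c k i j = 1 + minCost p (ε (k - 1)) (c (k - 1)) i j)
    {k : ℕ} (hk : 1 ≤ k) (hkm : k ≤ m) (hij : i < j) (herr : err p i j ≤ ε k)
    (hl : IsPath p (ε k) i j l) : c k i j ≤ pathCost (c k) l := by
  obtain rfl | hk := hk.eq_or_lt
  · exact hl.le_pathCost_of_forall_eq_one_add (f := 0) hij herr hc1 (Nat.zero_le _)
  · exact hl.le_pathCost_of_forall_eq_one_add hij herr (hck k hk hkm)
      (minCost_le_pathCost_minCost (hε _ (by omega) (by omega)) hl)

end CostRecursion

theorem cost_increment_general {n m : ℕ} (p : Fin n → Pt)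
    (ε : ℕ → ℝ) (hε1 : 0 < ε 1)
    (hεmono : ∀ k, 1 ≤ k → k < m → ε k < ε (k + 1))
    (c : ℕ → Fin n → Fin n → ℕ)
    (hc1 : ∀ i j : Fin n, i < j → err p i j ≤ ε 1 → c 1 i j = 1)
    (hck : ∀ k, 2 ≤ k → k ≤ m → ∀ i j : Fin n, i < j → err p i j ≤ ε k →
      c k i j = 1 + minCost p (ε (k - 1)) (c (k - 1)) i j) :
    ∀ k, 2 ≤ k → k ≤ m → ∀ i j : Fin n, i < j → err p i j ≤ ε (k - 1) →
      c k i j = c (k - 1) i j + 1 := by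
  intro k hk hkm i j hij herr
  have hmono : MonotoneOn ε (Set.Icc 1 m) :=
    (strictMonoOn_of_lt_add_one Set.ordConnected_Icc fun a _ ha ha' =>
      hεmono a ha.1 (by have := ha'.2; omega)).monotoneOn
  have hε : ∀ k, 1 ≤ k → k ≤ m → 0 ≤ ε k := fun k hk hkm =>
    hε1.le.trans (hmono ⟨le_rfl, by omega⟩ ⟨hk, hkm⟩ hk)
  have herrk : err p i j ≤ ε k :=
    herr.trans (hmono ⟨by omega, by omega⟩ ⟨by omega, hkm⟩ (by omega))
  have hmin : minCost p (ε (k - 1)) (c (k - 1)) i j = c (k - 1) i j :=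
    minCost_eq_of_le_pathCost (hε _ (by omega) (by omega)) hij herr fun l hl =>
      cost_le_pathCost hε hc1 hck (by omega) (by omega) hij herr hl
  rw [hck k hk hkm i j hij herrk, hmin, add_comm]

/-- For `2 ≤ k ≤ m` and any shortcut `(i, j)` valid for `ε (k-1)`,
the DP cost values satisfy `c k (i,j) = c (k-1) (i,j) + 1`. -/
theorem cost_increment {n m : ℕ} (hn : 2 ≤ n) (hm : 1 ≤ m) (p : Fin n → Pt)
    (ε : ℕ → ℝ) (hε1 : 0 < ε 1)
    (hεmono : ∀ k, 1 ≤ k → k < m → ε k < ε (k + 1))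
    (c : ℕ → Fin n → Fin n → ℕ)
    (hc1 : ∀ i j : Fin n, i < j → err p i j ≤ ε 1 → c 1 i j = 1)
    (hck : ∀ k, 2 ≤ k → k ≤ m → ∀ i j : Fin n, i < j → err p i j ≤ ε k →
      c k i j = 1 + minCost p (ε (k - 1)) (c (k - 1)) i j) :
    ∀ k, 2 ≤ k → k ≤ m → ∀ i j : Fin n, i < j → err p i j ≤ ε (k - 1) →
      c k i j = c (k - 1) i j + 1 :=
  cost_increment_general p ε hε1 hεmono c hc1 hck
end
end

section
/- The infimum, over all continuous progressive simplifications S, of ∫_0^{ε_M} |S(ε)| dε is attained, and it equals the minimum, over all progressive simplifications S_1, …, S_r for the tolerance sequence e_1 < … < e_r, of Σ_{k=1}^r (e_{k+1} − e_k)·|S_k|. -/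
open Metric

noncomputable section

/-- `l` is a minimum-cost path from `i` to `j` at tolerance `ε` w.r.t. cost `c`. -/
def IsMinPath {n : ℕ} (p : Fin n → Pt) (ε : ℝ) (c : Fin n → Fin n → ℕ) (i j : Fin n)
    (l : List (Fin n)) : Prop :=
  IsPath p ε i j l ∧ ∀ l', IsPath p ε i j l' → pathCost c l ≤ pathCost c l'

/-- `L'` is obtained from `L` by replacing each edge `(i, j)` of `L` by a minimum-cost
path from `i` to `j` at tolerance `ε`, and concatenating. -/
def Refines {n : ℕ} (p : Fin n → Pt) (ε : ℝ) (c : Fin n → Fin n → ℕ)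
    (L L' : List (Fin n)) : Prop :=
  ∃ f : Fin n × Fin n → List (Fin n),
    (∀ e ∈ edges L, IsMinPath p ε c e.1 e.2 (f e)) ∧
    L' = L.take 1 ++ ((edges L).map (fun e => (f e).tail)).flatten

/-- `S 1, …, S m` is a progressive simplification for the tolerances `ε 1 < … < ε m`:
each `S k` is an `ε k`-simplification (a path from `v0` to `v1`), and every vertex of
`S (k+1)` is a vertex of `S k`. -/
def ProgSimp {n : ℕ} (p : Fin n → Pt) (m : ℕ) (ε : ℕ → ℝ) (v0 v1 : Fin n)
    (S : ℕ → List (Fin n)) : Prop :=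
  (∀ k, 1 ≤ k → k ≤ m → IsPath p (ε k) v0 v1 (S k)) ∧
  (∀ k, 1 ≤ k → k < m → ∀ v ∈ S (k + 1), v ∈ S k)

/-- A continuous progressive simplification on `[0, εM)`: `S ε` is an `ε`-simplification
for every `0 ≤ ε < εM`, and every vertex of `S ε'` is a vertex of `S ε` whenever
`ε ≤ ε'`. -/
def ContProgSimp {n : ℕ} (p : Fin n → Pt) (εM : ℝ) (v0 v1 : Fin n)
    (S : ℝ → List (Fin n)) : Prop :=
  (∀ x : ℝ, 0 ≤ x → x < εM → IsPath p x v0 v1 (S x)) ∧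
  (∀ x x' : ℝ, 0 ≤ x → x ≤ x' → x' < εM → ∀ v ∈ S x', v ∈ S x)

/-!
On each interval `[e k, e (k+1))` no shortcut error lies strictly between the endpoints, so any
`ε`-simplification with `ε` in that interval is already an `e k`-simplification. Hence sampling a
continuous progressive simplification at a point of minimal size in each interval gives a discrete
progressive simplification of no larger weighted size, while a discrete one, extended as a step
function, is a continuous one with the same integral. The discrete costs form a finite set, so the
minimum is attained.
-/

open Set MeasureTheory

section Paths

variable {n : ℕ} {p : Fin n → Pt} {ε ε' : ℝ} {i j : Fin n} {l : List (Fin n)}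

lemma err_nonneg (p : Fin n → Pt) (i j : Fin n) : 0 ≤ err p i j :=
  hausdorffDist_nonneg

lemma subcurve_succ (p : Fin n → Pt) (t : Fin n) (h : (t : ℕ) + 1 < n) :
    subcurve p t ⟨t + 1, h⟩ = segment ℝ (p t) (p ⟨t + 1, h⟩) := by
  ext x
  simp only [subcurve, mem_iUnion]
  constructor
  · rintro ⟨t', ⟨ht, ht'⟩, _, hx⟩
    obtain rfl : t' = t := Fin.ext (by simp only [Fin.lt_def, Fin.le_def] at ht ht'; omega)
    exact hx
  · exact fun hx => ⟨t, ⟨le_rfl, Fin.lt_def.mpr (Nat.lt_succ_self _)⟩, h, hx⟩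

lemma err_succ_eq_zero (p : Fin n → Pt) (t : Fin n) (h : (t : ℕ) + 1 < n) :
    err p t ⟨t + 1, h⟩ = 0 := by
  rw [err, subcurve_succ, hausdorffDist_self_zero]

lemma forall_mem_edges_of_isChain {R : Fin n → Fin n → Prop} :
    ∀ {l : List (Fin n)}, l.IsChain R → ∀ e ∈ edges l, R e.1 e.2
  | [], _, e, he => by simp [edges] at he
  | [_], _, e, he => by simp [edges] at he
  | a :: b :: t, h, e, he => by
    rw [List.isChain_cons_cons] at h
    simp only [edges, List.tail_cons, List.zip_cons_cons, List.mem_cons] at he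
    rcases he with rfl | he
    · exact h.1
    · exact forall_mem_edges_of_isChain h.2 e he

namespace IsPath

lemma nodup (h : IsPath p ε i j l) : l.Nodup :=
  (List.isChain_iff_pairwise.mp h.1).imp ne_of_lt

lemma length_le (h : IsPath p ε i j l) : l.length ≤ n := by
  simpa using h.nodup.length_le_card

lemma mono_of_err_le (h : IsPath p ε i j l)
    (hεε' : ∀ a b : Fin n, a < b → err p a b ≤ ε → err p a b ≤ ε') : IsPath p ε' i j l :=
  ⟨h.1, h.2.1, h.2.2.1, fun e he =>
    hεε' _ _ (forall_mem_edges_of_isChain h.1 e he) (h.2.2.2 e he)⟩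

lemma mono (h : IsPath p ε i j l) (hεε' : ε ≤ ε') : IsPath p ε' i j l :=
  h.mono_of_err_le fun _ _ _ hab => hab.trans hεε'

end IsPath

lemma isPath_finRange (hn : 0 < n) (hε : 0 ≤ ε) :
    IsPath p ε ⟨0, hn⟩ ⟨n - 1, by omega⟩ (List.finRange n) := by
  have hne : List.finRange n ≠ [] := by simp; omega
  have hsucc : (List.finRange n).IsChain
      (fun a b : Fin n => ∃ h : (a : ℕ) + 1 < n, b = ⟨a + 1, h⟩) := by
    rw [List.isChain_iff_getElem]
    intro k hk
    simp only [List.length_finRange] at hk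
    simp only [List.getElem_finRange]
    exact ⟨by simp; omega, Fin.ext (by simp)⟩
  refine ⟨hsucc.imp fun a b ⟨_, hb⟩ => hb ▸ Fin.lt_def.mpr (Nat.lt_succ_self _), ?_, ?_, ?_⟩
  · rw [List.head?_eq_some_head hne, List.head_eq_getElem, List.getElem_finRange]
    rfl
  · rw [List.getLast?_eq_getLast_of_ne_nil hne, List.getLast_eq_getElem, List.getElem_finRange]
    exact congrArg some (Fin.ext (by simp))
  · intro e he
    obtain ⟨h, he2⟩ := forall_mem_edges_of_isChain hsucc e he
    rw [he2, err_succ_eq_zero]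
    exact hε

end Paths

lemma AntitoneOn.intervalIntegrable_of_Ico {f : ℝ → ℝ} {a b c : ℝ} (hab : a ≤ b)
    (hf : AntitoneOn f (Ico a b)) (hc : ∀ x ∈ Ico a b, c ≤ f x) :
    IntervalIntegrable f volume a b := by
  set g : ℝ → ℝ := fun x => if x < b then f x else c
  have hg : AntitoneOn g (Icc a b) := by
    intro x hx y hy hxy
    by_cases hyb : y < b
    · simp only [g, if_pos hyb, if_pos (hxy.trans_lt hyb)]
      exact hf ⟨hx.1, hxy.trans_lt hyb⟩ ⟨hy.1, hyb⟩ hxy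
    · simp only [g, if_neg hyb]
      split_ifs with hxb
      · exact hc x ⟨hx.1, hxb⟩
      · exact le_rfl
  have hgf : EqOn g f (Ico a b) := fun x hx => if_pos hx.2
  rw [intervalIntegrable_iff_integrableOn_Icc_of_le hab, integrableOn_Icc_iff_integrableOn_Ico]
  exact ((hg.integrableOn_isCompact isCompact_Icc).mono_set Ico_subset_Icc_self).congr_fun hgf
    measurableSet_Ico

section Simplifications

variable {n : ℕ} {p : Fin n → Pt} {v0 v1 : Fin n}

lemma ProgSimp.mem_of_le {m : ℕ} {ε : ℕ → ℝ} {S : ℕ → List (Fin n)}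
    (hS : ProgSimp p m ε v0 v1 S) {j k : ℕ} (hj : 1 ≤ j) (hjk : j ≤ k) (hkm : k ≤ m) {v : Fin n}
    (hv : v ∈ S k) : v ∈ S j := by
  induction k, hjk using Nat.le_induction with
  | base => exact hv
  | succ k hjk ih => exact ih (by omega) (hS.2 k (hj.trans hjk) (by omega) v hv)

lemma finite_setOf_progSimp_cost (m : ℕ) (ε w : ℕ → ℝ) :
    {s : ℝ | ∃ S : ℕ → List (Fin n), ProgSimp p m ε v0 v1 S ∧
      ∑ k ∈ Finset.Icc 1 m, w k * ((S k).length : ℝ) = s}.Finite := by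
  refine ((Set.finite_univ (α := Finset.Icc 1 m → Fin (n + 1))).image
    fun c => ∑ k : Finset.Icc 1 m, w k * ((c k : ℕ) : ℝ)).subset ?_
  rintro _ ⟨S, hS, rfl⟩
  refine ⟨fun k => ⟨(S k).length, Nat.lt_succ_of_le ?_⟩, trivial, ?_⟩
  · obtain ⟨k, hk⟩ := k
    rw [Finset.mem_Icc] at hk
    exact (hS.1 k hk.1 hk.2).length_le
  · exact Finset.sum_coe_sort (Finset.Icc 1 m) fun k => w k * ((S k).length : ℝ)

lemma exists_progSimp_cost_eq_sInf {m : ℕ} {ε : ℕ → ℝ} (w : ℕ → ℝ) {S₀ : ℕ → List (Fin n)}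
    (hS₀ : ProgSimp p m ε v0 v1 S₀) :
    ∃ S : ℕ → List (Fin n), ProgSimp p m ε v0 v1 S ∧
      ∑ k ∈ Finset.Icc 1 m, w k * ((S k).length : ℝ) =
        sInf {s : ℝ | ∃ S : ℕ → List (Fin n), ProgSimp p m ε v0 v1 S ∧
          ∑ k ∈ Finset.Icc 1 m, w k * ((S k).length : ℝ) = s} :=
  Set.Nonempty.csInf_mem (by exact ⟨_, S₀, hS₀, rfl⟩) (finite_setOf_progSimp_cost m ε w)

lemma sInf_progSimp_cost_le {m : ℕ} {ε : ℕ → ℝ} (w : ℕ → ℝ) {S : ℕ → List (Fin n)}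
    (hS : ProgSimp p m ε v0 v1 S) :
    sInf {s : ℝ | ∃ S : ℕ → List (Fin n), ProgSimp p m ε v0 v1 S ∧
        ∑ k ∈ Finset.Icc 1 m, w k * ((S k).length : ℝ) = s} ≤
      ∑ k ∈ Finset.Icc 1 m, w k * ((S k).length : ℝ) :=
  csInf_le (finite_setOf_progSimp_cost m ε w).bddBelow ⟨S, hS, rfl⟩

variable {εM : ℝ} {S : ℝ → List (Fin n)}

lemma ContProgSimp.length_antitoneOn (hS : ContProgSimp p εM v0 v1 S) :
    AntitoneOn (fun x => ((S x).length : ℝ)) (Ico 0 εM) := fun x hx y hy hxy =>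
  Nat.cast_le.mpr (List.subperm_of_subset (hS.1 y hy.1 hy.2).nodup
    fun v hv => hS.2 x y hx.1 hxy hy.2 v hv).length_le

lemma ContProgSimp.intervalIntegrable (hS : ContProgSimp p εM v0 v1 S) {a b : ℝ} (ha : 0 ≤ a)
    (hab : a ≤ b) (hb : b ≤ εM) : IntervalIntegrable (fun x => ((S x).length : ℝ)) volume a b :=
  (hS.length_antitoneOn.mono (Ico_subset_Ico ha hb)).intervalIntegrable_of_Ico hab
    fun _ _ => Nat.cast_nonneg _

end Simplifications

section Levels

variable {r : ℕ} {e : ℕ → ℝ} {x : ℝ} {k : ℕ}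

/-- The paper's step index: for increasing `e`, the `k ≤ r` with `e k ≤ x < e (k + 1)`;
junk value `0` when `x < e 1`. -/
def levelIndex (r : ℕ) (e : ℕ → ℝ) (x : ℝ) : ℕ :=
  Nat.findGreatest (fun k => e k ≤ x) r

lemma levelIndex_le : levelIndex r e x ≤ r :=
  Nat.findGreatest_le r

lemma le_levelIndex (hkr : k ≤ r) (hk : e k ≤ x) : k ≤ levelIndex r e x :=
  Nat.le_findGreatest hkr hk

lemma apply_levelIndex_le (hr : 1 ≤ r) (hx : e 1 ≤ x) : e (levelIndex r e x) ≤ x :=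
  Nat.findGreatest_spec (P := fun k => e k ≤ x) hr hx

lemma apply_mem_Icc (he : MonotoneOn e (Icc 1 (r + 1))) (hk1 : 1 ≤ k) (hkr : k ≤ r + 1) :
    e k ∈ Icc (e 1) (e (r + 1)) :=
  ⟨he ⟨le_rfl, by omega⟩ ⟨hk1, hkr⟩ hk1, he ⟨hk1, hkr⟩ ⟨by omega, le_rfl⟩ hkr⟩

lemma Ico_apply_subset (he : MonotoneOn e (Icc 1 (r + 1))) (hk : k ∈ Ico 1 (r + 1)) :
    Ico (e k) (e (k + 1)) ⊆ Ico (e 1) (e (r + 1)) := by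
  obtain ⟨hk1, hkr⟩ := hk
  exact Ico_subset_Ico (apply_mem_Icc he hk1 (by omega)).1 (apply_mem_Icc he (by omega) hkr).2

lemma levelIndex_mono : Monotone (levelIndex r e) := fun _ _ hxy =>
  Nat.findGreatest_mono_left (fun _ hk => hk.trans hxy) r

lemma levelIndex_eq (he : StrictMonoOn e (Icc 1 (r + 1))) (hk1 : 1 ≤ k) (hkr : k ≤ r)
    (hx : x ∈ Ico (e k) (e (k + 1))) : levelIndex r e x = k := by
  refine Nat.findGreatest_eq_iff.mpr ⟨hkr, fun _ => hx.1, fun j hkj hjr hj => ?_⟩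
  have := he.monotoneOn ⟨by omega, by omega⟩ ⟨by omega, by omega⟩ (Nat.succ_le_of_lt hkj)
  exact (hj.trans_lt hx.2).not_ge this

lemma integral_comp_levelIndex (g : ℕ → ℝ) (he : StrictMonoOn e (Icc 1 (r + 1))) :
    ∫ x in e 1..e (r + 1), g (levelIndex r e x) =
      ∑ k ∈ Finset.Icc 1 r, (e (k + 1) - e k) * g k := by
  have hpiece : ∀ k ∈ Ico 1 (r + 1),
      EqOn (fun x => g (levelIndex r e x)) (fun _ => g k) (Ioo (e k) (e (k + 1))) :=
    fun k hk x hx => by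
      simp only [levelIndex_eq he hk.1 (Nat.le_of_lt_succ hk.2) (Ioo_subset_Ico_self hx)]
  have hle : ∀ k ∈ Ico 1 (r + 1), e k ≤ e (k + 1) := fun k ⟨hk1, hkr⟩ =>
    he.monotoneOn ⟨hk1, by omega⟩ ⟨by omega, by omega⟩ (Nat.le_succ k)
  rw [← Finset.Ico_add_one_right_eq_Icc, ← intervalIntegral.sum_integral_adjacent_intervals_Ico
    (Nat.le_add_left 1 r) fun k hk => intervalIntegrable_const.congr_uIoo
      (by rw [uIoo_of_le (hle k hk)]; exact (hpiece k hk).symm)]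
  refine Finset.sum_congr rfl fun k hk => ?_
  rw [Finset.mem_Ico] at hk
  rw [intervalIntegral.integral_congr_Ioo_of_le (hle k hk) (hpiece k hk),
    intervalIntegral.integral_const, smul_eq_mul]

end Levels

section Correspondence

variable {n : ℕ} {p : Fin n → Pt} {v0 v1 : Fin n} {r : ℕ} {e : ℕ → ℝ}

lemma ProgSimp.contProgSimp_levelIndex {S : ℕ → List (Fin n)} (hS : ProgSimp p r e v0 v1 S)
    (hr : 1 ≤ r) (he1 : e 1 ≤ 0) (εM : ℝ) :
    ContProgSimp p εM v0 v1 (fun x => S (levelIndex r e x)) :=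
  ⟨fun _ hx _ => (hS.1 _ (le_levelIndex hr (he1.trans hx)) levelIndex_le).mono
      (apply_levelIndex_le hr (he1.trans hx)),
    fun _ _ hx hxx' _ _ hv => hS.mem_of_le (le_levelIndex hr (he1.trans hx))
      (levelIndex_mono hxx') levelIndex_le hv⟩

variable {S : ℝ → List (Fin n)}

lemma ContProgSimp.isPath_of_mem_Ico (hS : ContProgSimp p (e (r + 1)) v0 v1 S)
    (he : StrictMonoOn e (Icc 1 (r + 1))) (he1 : 0 ≤ e 1)
    (herr : ∀ a b : Fin n, a < b → err p a b < e (r + 1) →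
      ∃ k, 1 ≤ k ∧ k ≤ r ∧ e k = err p a b)
    {k : ℕ} (hk1 : 1 ≤ k) (hkr : k ≤ r) {x : ℝ} (hx : x ∈ Ico (e k) (e (k + 1))) :
    IsPath p (e k) v0 v1 (S x) := by
  obtain ⟨hx1, hxtop⟩ := Ico_apply_subset he.monotoneOn ⟨hk1, Nat.lt_succ_of_le hkr⟩ hx
  refine (hS.1 x (he1.trans hx1) hxtop).mono_of_err_le fun a b hab hle => ?_
  obtain ⟨j, hj1, hjr, hj⟩ := herr a b hab (hle.trans_lt hxtop)
  rw [← hj] at hle ⊢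
  exact he.monotoneOn ⟨hj1, by omega⟩ ⟨hk1, by omega⟩
    (levelIndex_eq he hk1 hkr hx ▸ le_levelIndex hjr hle)

lemma ContProgSimp.exists_progSimp_le (hS : ContProgSimp p (e (r + 1)) v0 v1 S)
    (he : StrictMonoOn e (Icc 1 (r + 1))) (he1 : 0 ≤ e 1)
    (herr : ∀ a b : Fin n, a < b → err p a b < e (r + 1) →
      ∃ k, 1 ≤ k ∧ k ≤ r ∧ e k = err p a b) :
    ∃ T : ℕ → List (Fin n), ProgSimp p r e v0 v1 T ∧
      ∑ k ∈ Finset.Icc 1 r, (e (k + 1) - e k) * ((T k).length : ℝ) ≤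
        ∫ x in e 1..e (r + 1), ((S x).length : ℝ) := by
  have hlt : ∀ k ∈ Ico 1 (r + 1), e k < e (k + 1) := by
    rintro k ⟨hk1, hkr⟩
    exact he ⟨hk1, by omega⟩ ⟨by omega, by omega⟩ (Nat.lt_succ_self k)
  have hint : ∀ k ∈ Ico 1 (r + 1),
      IntervalIntegrable (fun x => ((S x).length : ℝ)) volume (e k) (e (k + 1)) := by
    rintro k ⟨hk1, hkr⟩
    exact hS.intervalIntegrable
      (he1.trans (apply_mem_Icc he.monotoneOn hk1 (by omega)).1) (hlt k ⟨hk1, hkr⟩).le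
      (apply_mem_Icc he.monotoneOn (by omega) (by omega)).2
  have hmin : ∀ k ∈ Ico 1 (r + 1), ∃ x ∈ Ico (e k) (e (k + 1)),
      ∀ y ∈ Ico (e k) (e (k + 1)), (S x).length ≤ (S y).length := by
    intro k hk
    have hne : (Ico (e k) (e (k + 1))).Nonempty := ⟨e k, le_rfl, hlt k hk⟩
    exact ⟨_, Function.argminOn_mem (fun x => (S x).length) _ hne,
      fun _ hy => Function.argminOn_le (fun x => (S x).length) _ hy⟩
  choose! xs hxs hxs_min using hmin
  have hxs_mem : ∀ k ∈ Ico 1 (r + 1), xs k ∈ Ico 0 (e (r + 1)) := fun k hk =>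
    Ico_subset_Ico_left he1 (Ico_apply_subset he.monotoneOn hk (hxs k hk))
  refine ⟨fun k => S (xs k), ⟨fun k hk1 hkr => ?_, fun k hk1 hkr v hv => ?_⟩, ?_⟩
  · exact hS.isPath_of_mem_Ico he he1 herr hk1 hkr (hxs k ⟨hk1, by omega⟩)
  · exact hS.2 (xs k) (xs (k + 1)) (hxs_mem k ⟨hk1, by omega⟩).1
      ((hxs k ⟨hk1, by omega⟩).2.trans_le (hxs (k + 1) ⟨by omega, by omega⟩).1).le
      (hxs_mem (k + 1) ⟨by omega, by omega⟩).2 v hv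
  · rw [← Finset.Ico_add_one_right_eq_Icc,
      ← intervalIntegral.sum_integral_adjacent_intervals_Ico (Nat.le_add_left 1 r) hint]
    refine Finset.sum_le_sum fun k hk => ?_
    replace hk : k ∈ Ico 1 (r + 1) := Finset.mem_Ico.mp hk
    calc (e (k + 1) - e k) * ((S (xs k)).length : ℝ)
        = ∫ _ in e k..e (k + 1), ((S (xs k)).length : ℝ) := by
          rw [intervalIntegral.integral_const, smul_eq_mul]
      _ ≤ ∫ x in e k..e (k + 1), ((S x).length : ℝ) :=
          intervalIntegral.integral_mono_on_of_le_Ioo (hlt k hk).le intervalIntegrable_const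
            (hint k hk) fun y hy => Nat.cast_le.mpr (hxs_min k hk y (Ioo_subset_Ico_self hy))

end Correspondence

/-- The infimum of `∫₀^{εM} |S(ε)| dε` over all continuous progressive
simplifications is attained, and equals the minimum of `Σ_{k=1}^r (e (k+1) - e k) * |S k|`
over all progressive simplifications for the tolerance sequence `e 1 < … < e r` of
distinct shortcut error values below `εM`. -/
theorem continuous_progressive_minimum {n : ℕ} (hn : 2 ≤ n) (p : Fin n → Pt)
    (εM : ℝ)
    (hεMpos : 0 < εM)
    (r : ℕ) (hr : 1 ≤ r) (e : ℕ → ℝ)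
    (hemono : ∀ k, 1 ≤ k → k ≤ r → e k < e (k + 1))
    (hetop : e (r + 1) = εM)
    (heset : {x : ℝ | (∃ i j : Fin n, i < j ∧ err p i j = x) ∧ x < εM} =
      {x : ℝ | ∃ k, 1 ≤ k ∧ k ≤ r ∧ e k = x}) :
    ∃ T : ℝ → List (Fin n),
      ContProgSimp p εM (⟨0, by omega⟩ : Fin n) (⟨n - 1, by omega⟩ : Fin n) T ∧
      (∀ S : ℝ → List (Fin n),
        ContProgSimp p εM (⟨0, by omega⟩ : Fin n) (⟨n - 1, by omega⟩ : Fin n) S →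
        (∫ x in (0:ℝ)..εM, ((T x).length : ℝ)) ≤ ∫ x in (0:ℝ)..εM, ((S x).length : ℝ)) ∧
      (∫ x in (0:ℝ)..εM, ((T x).length : ℝ)) =
        sInf {s : ℝ | ∃ S : ℕ → List (Fin n),
          ProgSimp p r e (⟨0, by omega⟩ : Fin n) (⟨n - 1, by omega⟩ : Fin n) S ∧
          ∑ k ∈ Finset.Icc 1 r, (e (k + 1) - e k) * ((S k).length : ℝ) = s} := by
  subst hetop
  have he : StrictMonoOn e (Icc 1 (r + 1)) :=
    strictMonoOn_of_lt_succ ordConnected_Icc fun k _ hk hk' => by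
      simpa using hemono k hk.1 (by simp only [Order.succ_eq_add_one, mem_Icc] at hk'; omega)
  have herr : ∀ a b : Fin n, a < b → err p a b < e (r + 1) →
      ∃ k, 1 ≤ k ∧ k ≤ r ∧ e k = err p a b := fun a b hab h =>
    heset.subset ⟨⟨a, b, hab, rfl⟩, h⟩
  have he1 : e 1 = 0 := by
    obtain ⟨k, hk1, hkr, hk⟩ := herr ⟨0, by omega⟩ ⟨0 + 1, by omega⟩ (Fin.lt_def.mpr (by simp))
      ((err_succ_eq_zero p _ _).trans_lt hεMpos)
    obtain ⟨⟨a, b, -, hab⟩, -⟩ := heset.superset ⟨1, le_rfl, hr, rfl⟩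
    refine le_antisymm ?_ (hab ▸ err_nonneg p a b)
    rw [← err_succ_eq_zero p ⟨0, by omega⟩ (by simp; omega), ← hk]
    exact (apply_mem_Icc he.monotoneOn hk1 (by omega)).1
  have hfinRange : ProgSimp p r e ⟨0, by omega⟩ ⟨n - 1, by omega⟩ fun _ => List.finRange n :=
    ⟨fun k hk1 hkr =>
      isPath_finRange (by omega) (he1 ▸ (apply_mem_Icc he.monotoneOn hk1 (by omega)).1),
      fun _ _ _ _ => id⟩
  obtain ⟨S, hS, hSmin⟩ := exists_progSimp_cost_eq_sInf (fun k => e (k + 1) - e k) hfinRange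
  have hSint := integral_comp_levelIndex (fun k => ((S k).length : ℝ)) he
  rw [he1] at hSint
  refine ⟨_, hS.contProgSimp_levelIndex hr he1.le _, fun S' hS' => ?_, hSint.trans hSmin⟩
  obtain ⟨T, hT, hTle⟩ := hS'.exists_progSimp_le he he1.ge herr
  rw [he1] at hTle
  rw [hSint, hSmin]
  exact (sInf_progSimp_cost_le _ hT).trans hTle
end
end

section
/- Let p : Fin n → ℝ² with n ≥ 2, let P := ⋃_{t=0}^{n−2} segment ℝ (p t) (p (t+1)) be the associated polyline, and let a, b ∈ ℝ². Then the supremum of Metric.infDist x (segment ℝ a b) over x ∈ P is attained at a vertex of the polyline: there exists an index t with 0 ≤ t ≤ n−1 such that Metric.infDist (p t) (segment ℝ a b) = max_{0 ≤ s ≤ n−1} Metric.infDist (p s) (segment ℝ a b), and for every x ∈ P, Metric.infDist x (segment ℝ a b) ≤ Metric.infDist (p t) (segment ℝ a b). -/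
open Metric

noncomputable section

lemma infDist_le_max_of_mem_segment {K : Set Pt} (hK : Convex ℝ K)
    (hc : IsCompact K) (hne : K.Nonempty) {x u v : Pt} (hx : x ∈ segment ℝ u v) :
    Metric.infDist x K ≤ max (Metric.infDist u K) (Metric.infDist v K) := by
  obtain ⟨s, t, hs, ht, hst, rfl⟩ := hx
  obtain ⟨yu, hyu, hdu⟩ := hc.exists_infDist_eq_dist hne u
  obtain ⟨yv, hyv, hdv⟩ := hc.exists_infDist_eq_dist hne v
  have hmem : s • yu + t • yv ∈ K := hK hyu hyv hs ht hst
  have key : Metric.infDist (s • u + t • v) K ≤ s * dist u yu + t * dist v yv := by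
    calc Metric.infDist (s • u + t • v) K ≤ dist (s • u + t • v) (s • yu + t • yv) :=
          Metric.infDist_le_dist_of_mem hmem
      _ ≤ s * dist u yu + t * dist v yv := by
          rw [dist_eq_norm, dist_eq_norm, dist_eq_norm]
          have h : s • u + t • v - (s • yu + t • yv) = s • (u - yu) + t • (v - yv) := by
            module
          rw [h]
          calc ‖s • (u - yu) + t • (v - yv)‖ ≤ ‖s • (u - yu)‖ + ‖t • (v - yv)‖ :=
                norm_add_le _ _
            _ = s * ‖u - yu‖ + t * ‖v - yv‖ := by
                rw [norm_smul, norm_smul, Real.norm_of_nonneg hs, Real.norm_of_nonneg ht]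
  rw [← hdu, ← hdv] at key
  refine key.trans ?_
  have h2 : s * Metric.infDist u K + t * Metric.infDist v K
      ≤ s * max (Metric.infDist u K) (Metric.infDist v K)
        + t * max (Metric.infDist u K) (Metric.infDist v K) := by
    gcongr
    · exact le_max_left _ _
    · exact le_max_right _ _
  calc _ ≤ _ := h2
    _ = max (Metric.infDist u K) (Metric.infDist v K) := by rw [← add_mul, hst, one_mul]

lemma seg_compact (a b : Pt) : IsCompact (segment ℝ a b) := by
  rw [segment_eq_image']
  exact isCompact_Icc.image (by continuity)

/-- The supremum of the distance to a segment over a polyline is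
attained at a vertex of the polyline: there is a vertex `p t` farthest from the segment
among all vertices, and every point of the polyline is at most that far away. -/
theorem polyline_farthest_at_vertex {n : ℕ} (hn : 2 ≤ n) (p : Fin n → Pt) (a b : Pt)
    (P : Set Pt)
    (hP : P = ⋃ (t : Fin n) (h : (t : ℕ) + 1 < n), segment ℝ (p t) (p ⟨(t : ℕ) + 1, h⟩)) :
    ∃ t : Fin n,
      (∀ s : Fin n,
        Metric.infDist (p s) (segment ℝ a b) ≤ Metric.infDist (p t) (segment ℝ a b)) ∧
      ∀ x ∈ P, Metric.infDist x (segment ℝ a b) ≤ Metric.infDist (p t) (segment ℝ a b) := by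
  have hne : (0 : ℕ) < n := by omega
  haveI : Nonempty (Fin n) := ⟨⟨0, hne⟩⟩
  obtain ⟨t, ht⟩ := Finite.exists_max fun s : Fin n => Metric.infDist (p s) (segment ℝ a b)
  refine ⟨t, fun s => ht s, ?_⟩
  intro x hx
  rw [hP] at hx
  simp only [Set.mem_iUnion] at hx
  obtain ⟨s, h, hxs⟩ := hx
  have hb := infDist_le_max_of_mem_segment (convex_segment a b)
    (seg_compact a b) ⟨a, left_mem_segment ℝ a b⟩ hxs
  exact hb.trans (max_le (ht s) (ht ⟨(s : ℕ) + 1, h⟩))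
end
end

section
/- For all 0 ≤ i < j ≤ n−1, the Hausdorff-distance error of the shortcut (i,j) equals the largest distance from a vertex of the subcurve to the segment: ε(i,j) = max_{i ≤ t ≤ j} Metric.infDist (p t) (segment ℝ (p i) (p j)). -/
/-!
Every vertex lies on the subcurve, which gives `≥`. For `≤`: the distance to the convex set
`S = [p i, p j]` is a convex function, so on each edge it is bounded by its value at a vertex.
Conversely, a point `x ∈ S` is matched by a point `y` of the subcurve with the same coordinate
along `p j - p i` (discrete intermediate value theorem, then continuity on one edge); `x` is
then the orthogonal projection of `y` onto the line of `S`, so `dist x y ≤ infDist y S`.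
-/

open Metric

noncomputable section

section Convex

variable {E : Type*} [NormedAddCommGroup E] [NormedSpace ℝ E]

theorem convexOn_infDist {s : Set E} (hs : Convex ℝ s) : ConvexOn ℝ Set.univ (infDist · s) := by
  refine ⟨convex_univ, fun x _ y _ a b ha hb hab => ?_⟩
  rcases s.eq_empty_or_nonempty with rfl | hne
  · simp
  refine le_of_forall_pos_le_add fun ε hε => ?_
  obtain ⟨x', hx', hxx'⟩ := (infDist_lt_iff hne).1 (lt_add_of_pos_right (infDist x s) hε)
  obtain ⟨y', hy', hyy'⟩ := (infDist_lt_iff hne).1 (lt_add_of_pos_right (infDist y s) hε)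
  calc infDist (a • x + b • y) s ≤ dist (a • x + b • y) (a • x' + b • y') :=
        infDist_le_dist_of_mem (hs hx' hy' ha hb hab)
    _ ≤ a * dist x x' + b * dist y y' := by
        simpa only [dist_smul₀, Real.norm_of_nonneg ha, Real.norm_of_nonneg hb]
          using dist_add_add_le (a • x) (b • y) (a • x') (b • y')
    _ ≤ a * (infDist x s + ε) + b * (infDist y s + ε) := by gcongr
    _ = a • infDist x s + b • infDist y s + ε := by
        simp only [smul_eq_mul]; linear_combination ε * hab

end Convex

section Projection

variable {E : Type*} [NormedAddCommGroup E] [InnerProductSpace ℝ E]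

theorem dist_le_infDist_segment_of_inner_eq_zero {a b x y : E} (hx : x ∈ segment ℝ a b)
    (hy : inner ℝ (b - a) (y - x) = 0) : dist x y ≤ infDist y (segment ℝ a b) := by
  refine (le_infDist ⟨a, left_mem_segment ℝ a b⟩).2 fun z hz => ?_
  rw [segment_eq_image'] at hx hz
  obtain ⟨s, -, rfl⟩ := hx
  obtain ⟨t, -, rfl⟩ := hz
  set x := a + s • (b - a)
  have horth : inner ℝ (y - x) (x - (a + t • (b - a))) = 0 := by
    rw [show x - (a + t • (b - a)) = (s - t) • (b - a) by module, real_inner_smul_right,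
      real_inner_comm, hy, mul_zero]
  have hpyth := norm_add_sq_eq_norm_sq_add_norm_sq_real horth
  rw [sub_add_sub_cancel] at hpyth
  rw [dist_comm, dist_eq_norm, dist_eq_norm]
  nlinarith [norm_nonneg (y - x), norm_nonneg (y - (a + t • (b - a)))]

end Projection

theorem Fin.exists_le_le_succ {α : Type*} [LinearOrder α] {n : ℕ} {g : Fin n → α} {v : α}
    {i j : Fin n} (hij : i < j) (hi : g i ≤ v) (hj : v ≤ g j) :
    ∃ (t : Fin n) (h : (t : ℕ) + 1 < n), i ≤ t ∧ t < j ∧ g t ≤ v ∧ v ≤ g ⟨t + 1, h⟩ := by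
  classical
  set T := (Finset.Ico i j).filter (g · ≤ v)
  have hT : T.Nonempty := ⟨i, by simp [T, hij, hi]⟩
  obtain ⟨⟨hit, htj⟩, hgt⟩ : (i ≤ T.max' hT ∧ T.max' hT < j) ∧ g (T.max' hT) ≤ v := by
    simpa [T] using T.max'_mem hT
  have h : (T.max' hT : ℕ) + 1 < n := by omega
  refine ⟨_, h, hit, htj, hgt, ?_⟩
  set s : Fin n := ⟨_, h⟩
  rcases (show s ≤ j from htj).eq_or_lt with hsj | hsj
  · rwa [hsj]
  · by_contra! hlt
    have hmem : s ∈ T := by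
      simp only [T, Finset.mem_filter, Finset.mem_Ico]
      exact ⟨⟨hit.trans (Fin.le_def.2 (Nat.le_succ _)), hsj⟩, hlt.le⟩
    exact absurd (T.le_max' s hmem) (by simp [s, Fin.le_def])

section Subcurve

variable {n : ℕ} (p : Fin n → Pt) {i j : Fin n}

theorem mem_subcurve_iff {x : Pt} : x ∈ subcurve p i j ↔ ∃ (t : Fin n) (h : (t : ℕ) + 1 < n),
    i ≤ t ∧ t < j ∧ x ∈ segment ℝ (p t) (p ⟨t + 1, h⟩) := by
  simp only [subcurve, Set.mem_iUnion, exists_prop, and_assoc]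
  exact ⟨fun ⟨t, h1, h2, h, hx⟩ => ⟨t, h, h1, h2, hx⟩, fun ⟨t, h, h1, h2, hx⟩ => ⟨t, h1, h2, h, hx⟩⟩

theorem vertex_mem_subcurve (hij : i < j) {t : Fin n} (ht : t ∈ Finset.Icc i j) :
    p t ∈ subcurve p i j := by
  obtain ⟨hit, htj⟩ := Finset.mem_Icc.1 ht
  rcases htj.lt_or_eq with htj | rfl
  · exact (mem_subcurve_iff p).2 ⟨t, by omega, hit, htj, left_mem_segment ℝ _ _⟩
  · refine (mem_subcurve_iff p).2 ⟨⟨t - 1, by omega⟩, by dsimp only; omega,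
      Fin.le_def.2 (by dsimp only; omega), Fin.lt_def.2 (by dsimp only; omega), ?_⟩
    convert right_mem_segment ℝ _ _
    dsimp only; omega

theorem subcurve_subset_convexHull : subcurve p i j ⊆ convexHull ℝ (Set.range p) := by
  intro x hx
  obtain ⟨t, h, -, -, hx⟩ := (mem_subcurve_iff p).1 hx
  exact segment_subset_convexHull (Set.mem_range_self _) (Set.mem_range_self _) hx

theorem exists_mem_subcurve_eq {f : Pt → ℝ} (hf : Continuous f) (hij : i < j) {v : ℝ}
    (hi : f (p i) ≤ v) (hj : v ≤ f (p j)) : ∃ y ∈ subcurve p i j, f y = v := by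
  obtain ⟨t, h, hit, htj, hlo, hhi⟩ := Fin.exists_le_le_succ (g := f ∘ p) hij hi hj
  obtain ⟨y, hy, rfl⟩ := (convex_segment (p t) (p ⟨t + 1, h⟩)).isPreconnected.intermediate_value
    (left_mem_segment ℝ _ _) (right_mem_segment ℝ _ _) hf.continuousOn ⟨hlo, hhi⟩
  exact ⟨y, (mem_subcurve_iff p).2 ⟨t, h, hit, htj, hy⟩, rfl⟩

theorem exists_mem_subcurve_inner_eq_zero (hij : i < j) {x : Pt}
    (hx : x ∈ segment ℝ (p i) (p j)) :
    ∃ y ∈ subcurve p i j, inner ℝ (p j - p i) (y - x) = 0 := by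
  have hf : Continuous (inner ℝ (p j - p i) ·) := by fun_prop
  rw [segment_eq_image'] at hx
  obtain ⟨θ, ⟨hθ0, hθ1⟩, rfl⟩ := hx
  have hθ : inner ℝ (p j - p i) (p i + θ • (p j - p i)) =
      inner ℝ (p j - p i) (p i) + θ * ‖p j - p i‖ ^ 2 := by
    rw [inner_add_right, real_inner_smul_right, real_inner_self_eq_norm_sq]
  have hpj : inner ℝ (p j - p i) (p j) = inner ℝ (p j - p i) (p i) + ‖p j - p i‖ ^ 2 := by
    rw [← real_inner_self_eq_norm_sq, ← inner_add_right, add_sub_cancel]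
  obtain ⟨y, hy, hyx⟩ := exists_mem_subcurve_eq p hf hij
    (v := inner ℝ (p j - p i) (p i + θ • (p j - p i)))
    (by rw [hθ]; nlinarith [sq_nonneg ‖p j - p i‖])
    (by rw [hθ, hpj]; nlinarith [sq_nonneg ‖p j - p i‖])
  exact ⟨y, hy, by rw [inner_sub_right, hyx, sub_self]⟩

theorem infDist_le_of_mem_subcurve {s : Set Pt} (hs : Convex ℝ s) {r : ℝ}
    (hr : ∀ t ∈ Finset.Icc i j, infDist (p t) s ≤ r) {y : Pt} (hy : y ∈ subcurve p i j) :
    infDist y s ≤ r := by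
  obtain ⟨t, h, hit, htj, hy⟩ := (mem_subcurve_iff p).1 hy
  have hsucc : i ≤ ⟨t + 1, h⟩ ∧ ⟨t + 1, h⟩ ≤ j := by simp only [Fin.le_def] at hit ⊢; omega
  exact ((convexOn_infDist hs).le_on_segment trivial trivial hy).trans
    (max_le (hr t (Finset.mem_Icc.2 ⟨hit, htj.le⟩)) (hr _ (Finset.mem_Icc.2 hsucc)))

theorem hausdorffEDist_subcurve_segment_ne_top (hij : i < j) :
    hausdorffEDist (subcurve p i j) (segment ℝ (p i) (p j)) ≠ ⊤ := by
  have hbdd : Bornology.IsBounded (convexHull ℝ (Set.range p)) :=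
    isBounded_convexHull.2 (Set.finite_range p).isBounded
  exact hausdorffEDist_ne_top_of_nonempty_of_bounded
    ⟨p i, vertex_mem_subcurve p hij (Finset.left_mem_Icc.2 hij.le)⟩
    ⟨p i, left_mem_segment ℝ _ _⟩ (hbdd.subset (subcurve_subset_convexHull p))
    (hbdd.subset (segment_subset_convexHull (Set.mem_range_self _) (Set.mem_range_self _)))

end Subcurve

theorem err_eq_max_vertex_dist_general {n : ℕ} (p : Fin n → Pt)
    (i j : Fin n) (hij : i < j) :
    err p i j = (Finset.Icc i j).sup' (Finset.nonempty_Icc.mpr hij.le)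
      (fun t => Metric.infDist (p t) (segment ℝ (p i) (p j))) := by
  set S := segment ℝ (p i) (p j)
  set M := (Finset.Icc i j).sup' _ (fun t => infDist (p t) S)
  have hM : ∀ t ∈ Finset.Icc i j, infDist (p t) S ≤ M := fun t ht =>
    Finset.le_sup' (fun t => infDist (p t) S) ht
  have hC : ∀ y ∈ subcurve p i j, infDist y S ≤ M := fun y hy =>
    infDist_le_of_mem_subcurve p (convex_segment _ _) hM hy
  refine le_antisymm ?_ (Finset.sup'_le _ _ fun t ht => ?_)
  · refine hausdorffDist_le_of_infDist
      (infDist_nonneg.trans (hM i (Finset.left_mem_Icc.2 hij.le))) (fun x hx => ?_) hC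
    obtain ⟨y, hy, hxy⟩ := exists_mem_subcurve_inner_eq_zero p hij hx
    calc infDist x (subcurve p i j) ≤ dist x y := infDist_le_dist_of_mem hy
      _ ≤ infDist y S := dist_le_infDist_segment_of_inner_eq_zero hx hxy
      _ ≤ M := hC y hy
  · rw [err, hausdorffDist_comm]
    exact infDist_le_hausdorffDist_of_mem (vertex_mem_subcurve p hij ht)
      (hausdorffEDist_subcurve_segment_ne_top p hij)

/-- The Hausdorff-distance error of a shortcut `(i, j)` equals the
largest distance from a vertex `p t`, `i ≤ t ≤ j`, of the subcurve to the segment. -/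
theorem err_eq_max_vertex_dist {n : ℕ} (hn : 2 ≤ n) (p : Fin n → Pt)
    (i j : Fin n) (hij : i < j) :
    err p i j = (Finset.Icc i j).sup' (Finset.nonempty_Icc.mpr hij.le)
      (fun t => Metric.infDist (p t) (segment ℝ (p i) (p j))) :=
  err_eq_max_vertex_dist_general p i j hij
end
end

section
/- For all points a, b, x ∈ ℝ², the distance from x to the segment from a to b equals the maximum of the distances from x to the two rays spanned by the segment: Metric.infDist x (segment ℝ a b) = max (Metric.infDist x (ray(a,b))) (Metric.infDist x (ray(b,a))). -/
open Metric

noncomputable section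

/-- The ray emanating from `a` through `b`. -/
def ray (a b : Pt) : Set Pt := {x : Pt | ∃ t : ℝ, 0 ≤ t ∧ x = a + t • (b - a)}

/-!
On the line `t ↦ lineMap a b t` the segment and the two rays are the images of `[0, 1]`,
`[0, ∞)` and `(-∞, 1]`, so every segment joining a point of the first ray to a point of the
second meets `[a, b]`. Since closed balls are convex, a point of a segment is no farther from `x`
than the farther endpoint; this gives `≤`, and `≥` is monotonicity of `infDist`.
-/

open Set AffineMap

theorem infDist_eq_max_of_segment_inter_nonempty {E : Type*} [SeminormedAddCommGroup E]
    [NormedSpace ℝ E] {K S T : Set E} (x : E) (hK : K.Nonempty) (hKS : K ⊆ S) (hKT : K ⊆ T)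
    (hmeet : ∀ y ∈ S, ∀ z ∈ T, (segment ℝ y z ∩ K).Nonempty) :
    infDist x K = max (infDist x S) (infDist x T) := by
  refine le_antisymm ?_ (max_le (infDist_le_infDist_of_subset hKS hK)
    (infDist_le_infDist_of_subset hKT hK))
  by_contra! hlt
  obtain ⟨y, hyS, hy⟩ := (infDist_lt_iff (hK.mono hKS)).mp ((le_max_left _ _).trans_lt hlt)
  obtain ⟨z, hzT, hz⟩ := (infDist_lt_iff (hK.mono hKT)).mp ((le_max_right _ _).trans_lt hlt)
  obtain ⟨p, hpyz, hpK⟩ := hmeet y hyS z hzT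
  have hp : dist p x ≤ max (dist y x) (dist z x) :=
    (convex_closedBall x _).segment_subset (by simp) (by simp) hpyz
  rw [dist_comm p, dist_comm y, dist_comm z] at hp
  linarith [infDist_le_dist_of_mem (x := x) hpK, max_lt hy hz]

theorem ray_eq_image_lineMap (a b : Pt) : ray a b = lineMap a b '' Ici (0 : ℝ) := by
  ext p
  simp [ray, lineMap_apply_module', add_comm, eq_comm]

theorem ray_swap_eq_image_lineMap (a b : Pt) : ray b a = lineMap a b '' Iic (1 : ℝ) := by
  rw [ray_eq_image_lineMap, ← sub_zero (1 : ℝ), ← image_const_sub_Ici, image_image]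
  simp only [lineMap_apply_one_sub]

theorem uIcc_inter_Icc_zero_one_nonempty {s u : ℝ} (hs : 0 ≤ s) (hu : u ≤ 1) :
    (uIcc s u ∩ Icc 0 1).Nonempty := by
  rw [uIcc, Icc_inter_Icc, nonempty_Icc]
  simp only [max_le_iff, le_min_iff]
  grind

/-- The distance from a point to a segment equals the maximum of its
distances to the two rays spanned by the segment. -/
theorem infDist_segment_eq_max_rays (a b x : Pt) :
    Metric.infDist x (segment ℝ a b) =
      max (Metric.infDist x (ray a b)) (Metric.infDist x (ray b a)) := by
  rw [segment_eq_image_lineMap, ray_eq_image_lineMap, ray_swap_eq_image_lineMap]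
  refine infDist_eq_max_of_segment_inter_nonempty x ((nonempty_Icc.2 zero_le_one).image _)
    (image_mono Icc_subset_Ici_self) (image_mono Icc_subset_Iic_self) ?_
  rintro _ ⟨s, hs, rfl⟩ _ ⟨u, hu, rfl⟩
  rw [← image_segment, segment_eq_uIcc]
  exact ((uIcc_inter_Icc_zero_one_nonempty hs hu).image _).mono (image_inter_subset _ _ _)
end
end

section
/- Let P ⊆ ℝ² be a nonempty finite set and let a, b ∈ ℝ². Then max_{x ∈ P} Metric.infDist x (segment ℝ a b) = max ( max_{x ∈ P} Metric.infDist x (ray(a,b)), max_{x ∈ P} Metric.infDist x (ray(b,a)) ). In particular, a point of P furthest from one of the two rays is a point of P furthest from the segment. -/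
/-!
Parametrize the line through `a` and `b` as `t ↦ a + t • (b - a)`: the segment is the image of
`[0, 1]`, the two rays are the images of `[0, ∞)` and `(-∞, 1]`. Given points of the two rays
with parameters `t ≥ 0` and `s ≤ 1`, either one of them already lies on the segment, or
`s < 0 < 1 < t`, and then `a` lies between them, so by convexity of `t ↦ dist x (a + t • (b - a))`
it is at most as far from `x` as one of them. Hence the distance to the segment is at most the
larger of the distances to the rays; the reverse inequality holds since both rays contain the
segment.
-/

open Metric

noncomputable section

open Set AffineMap

theorem Finset.sup'_sup_eq {ι α : Type*} [SemilatticeSup α] {s : Finset ι} (hs : s.Nonempty)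
    (f g : ι → α) : s.sup' hs (fun i => f i ⊔ g i) = s.sup' hs f ⊔ s.sup' hs g :=
  le_antisymm
    (Finset.sup'_le _ _ fun _ hi => sup_le_sup (Finset.le_sup' f hi) (Finset.le_sup' g hi))
    (sup_le (Finset.sup'_mono_fun fun _ _ => le_sup_left)
      (Finset.sup'_mono_fun fun _ _ => le_sup_right))

theorem Metric.le_max_infDist_of_forall_le_max_dist {α : Type*} [PseudoMetricSpace α]
    {x : α} {s t : Set α} {c : ℝ} (hs : s.Nonempty) (ht : t.Nonempty)
    (h : ∀ y ∈ s, ∀ z ∈ t, c ≤ max (dist x y) (dist x z)) :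
    c ≤ max (infDist x s) (infDist x t) := by
  by_contra! hlt
  obtain ⟨y, hy, hxy⟩ := (infDist_lt_iff hs).1 ((le_max_left _ _).trans_lt hlt)
  obtain ⟨z, hz, hxz⟩ := (infDist_lt_iff ht).1 ((le_max_right _ _).trans_lt hlt)
  exact (h y hy z hz).not_gt (max_lt hxy hxz)

section NormedSpace

variable {E : Type*} [NormedAddCommGroup E] [NormedSpace ℝ E]

theorem dist_lineMap_le_max (x a b : E) {s r t : ℝ} (hsr : s ≤ r) (hrt : r ≤ t) :
    dist x (lineMap a b r) ≤ max (dist x (lineMap a b s)) (dist x (lineMap a b t)) := by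
  simpa only [dist_comm x, Function.comp_apply] using
    ((convexOn_univ_dist x).comp_affineMap (lineMap a b)).le_max_of_mem_Icc
      (mem_univ s) (mem_univ t) ⟨hsr, hrt⟩

theorem infDist_lineMap_Icc_le_max (x a b : E) :
    infDist x (lineMap a b '' Icc (0 : ℝ) 1) ≤
      max (infDist x (lineMap a b '' Ici (0 : ℝ))) (infDist x (lineMap a b '' Iic (1 : ℝ))) := by
  refine le_max_infDist_of_forall_le_max_dist (nonempty_Ici.image _) (nonempty_Iic.image _) ?_
  rintro _ ⟨t, ht, rfl⟩ _ ⟨s, hs, rfl⟩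
  by_cases ht1 : t ≤ 1
  · exact (infDist_le_dist_of_mem (mem_image_of_mem _ (show t ∈ Icc (0 : ℝ) 1 from ⟨ht, ht1⟩))).trans (le_max_left _ _)
  by_cases hs0 : 0 ≤ s
  · exact (infDist_le_dist_of_mem (mem_image_of_mem _ (show s ∈ Icc (0 : ℝ) 1 from ⟨hs0, hs⟩))).trans (le_max_right _ _)
  push Not at ht1 hs0
  calc infDist x (lineMap a b '' Icc (0 : ℝ) 1)
      ≤ dist x (lineMap a b (0 : ℝ)) :=
        infDist_le_dist_of_mem (mem_image_of_mem _ ⟨le_rfl, zero_le_one⟩)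
    _ ≤ max (dist x (lineMap a b s)) (dist x (lineMap a b t)) :=
        dist_lineMap_le_max x a b hs0.le (by linarith)
    _ = max (dist x (lineMap a b t)) (dist x (lineMap a b s)) := max_comm _ _

theorem infDist_lineMap_Icc_eq_max (x a b : E) :
    infDist x (lineMap a b '' Icc (0 : ℝ) 1) =
      max (infDist x (lineMap a b '' Ici (0 : ℝ))) (infDist x (lineMap a b '' Iic (1 : ℝ))) := by
  have hne : (lineMap a b '' Icc (0 : ℝ) 1).Nonempty := (nonempty_Icc.2 zero_le_one).image _
  exact (infDist_lineMap_Icc_le_max x a b).antisymm <| max_le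
    (infDist_le_infDist_of_subset (image_mono Icc_subset_Ici_self) hne)
    (infDist_le_infDist_of_subset (image_mono Icc_subset_Iic_self) hne)

end NormedSpace

theorem infDist_segment_eq_max_infDist_ray (x a b : Pt) :
    infDist x (segment ℝ a b) = max (infDist x (ray a b)) (infDist x (ray b a)) := by
  rw [segment_eq_image_lineMap, ray_eq_image_lineMap, ray_swap_eq_image_lineMap,
    infDist_lineMap_Icc_eq_max]

/-- For a nonempty finite set `P`, the maximum distance from a point of
`P` to a segment equals the larger of the maximum distances to the two rays spanned by
the segment. -/
theorem max_infDist_segment_eq_max_rays (P : Finset Pt) (hP : P.Nonempty) (a b : Pt) :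
    P.sup' hP (fun x => Metric.infDist x (segment ℝ a b)) =
      max (P.sup' hP (fun x => Metric.infDist x (ray a b)))
          (P.sup' hP (fun x => Metric.infDist x (ray b a))) := by
  simp_rw [infDist_segment_eq_max_infDist_ray]
  exact Finset.sup'_sup_eq hP _ _
end
end
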